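/- arXiv:2204.09926 — 5 statements merged into one kernel-verified Lean document; each statement's English description precedes it below -/
import Mathlib

section
/- Every Alexandroff T0 space (a T0 space in which arbitrary intersections of open sets are open) is a directed space. -/
/-! If `x ⤳ y`, the constant net at `x` converges to `y`, so a directed open set containing `y`
contains `x`. In an Alexandroff space every set closed under generization in this sense is open. -/

variable {X : Type*}

/-- The specialization order: `x ⊑ y` iff `x ∈ closure {y}`. -/
def sle [TopologicalSpace X] (x y : X) : Prop := x ∈ closure {y}

/-- A directed subset with respect to the specialization order. -/
def IsDirSet [TopologicalSpace X] (D : Set X) : Prop :=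
  D.Nonempty ∧ ∀ a ∈ D, ∀ b ∈ D, ∃ c ∈ D, sle a c ∧ sle b c

/-- `DConv D x`: the directed set `D`, viewed as a net (indexed by itself with
the specialization order), converges to `x`. -/
def DConv [TopologicalSpace X] (D : Set X) (x : X) : Prop :=
  IsDirSet D ∧ ∀ U : Set X, IsOpen U → x ∈ U → ∃ d ∈ D, ∀ e ∈ D, sle d e → e ∈ U

/-- Directed open set. -/
def DOpen [TopologicalSpace X] (U : Set X) : Prop :=
  ∀ D : Set X, ∀ x : X, DConv D x → x ∈ U → (D ∩ U).Nonempty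

/-- A directed space: every directed open set is open. -/
def IsDirectedSpace (X : Type*) [TopologicalSpace X] : Prop :=
  ∀ U : Set X, DOpen U → IsOpen U

lemma sle_iff_specializes [TopologicalSpace X] {x y : X} : sle x y ↔ y ⤳ x :=
  specializes_iff_mem_closure.symm

lemma isDirSet_singleton [TopologicalSpace X] (x : X) : IsDirSet {x} := by
  refine ⟨Set.singleton_nonempty x, ?_⟩
  rintro a ha b hb
  exact ⟨x, rfl, ha ▸ sle_iff_specializes.2 le_rfl, hb ▸ sle_iff_specializes.2 le_rfl⟩

lemma dConv_singleton_of_specializes [TopologicalSpace X] {x y : X} (h : x ⤳ y) :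
    DConv {x} y := by
  refine ⟨isDirSet_singleton x, fun U hU hyU => ⟨x, rfl, ?_⟩⟩
  rintro e rfl -
  exact specializes_iff_forall_open.1 h U hU hyU

lemma DOpen.mem_of_specializes [TopologicalSpace X] {U : Set X} (hU : DOpen U) {x y : X}
    (h : x ⤳ y) (hy : y ∈ U) : x ∈ U := by
  obtain ⟨_, rfl, hxU⟩ := hU {x} y (dConv_singleton_of_specializes h) hy
  exact hxU

theorem stmt_4_general [TopologicalSpace X]
    (hAlex : ∀ S : Set (Set X), (∀ U ∈ S, IsOpen U) → IsOpen (⋂₀ S)) :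
    IsDirectedSpace X := by
  have : AlexandrovDiscrete X := ⟨hAlex⟩
  exact fun U hU => isOpen_iff_forall_specializes.2 fun _ _ h hy => hU.mem_of_specializes h hy

/-- every Alexandroff T0 space is a directed space. -/
theorem stmt_4 [TopologicalSpace X] [T0Space X]
    (hAlex : ∀ S : Set (Set X), (∀ U ∈ S, IsOpen U) → IsOpen (⋂₀ S)) :
    IsDirectedSpace X :=
  stmt_4_general hAlex
end

section
/- Let X and Y be T0 spaces with Y a directed space. A function f : X → Y is directed continuous (monotone with respect to the specialization orders and preserving convergence of directed nets: D → x implies f(D) → f(x)) if and only if the preimage of every directed open set of Y is directed open in X. Moreover, if both X and Y are directed spaces, f is topologically continuous if and only if it is directed continuous. -/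
variable {X : Type*}

/-- Directed continuity: monotone for the specialization orders and preserving
limits of directed nets. -/
def DirCont {Y : Type*} [TopologicalSpace X] [TopologicalSpace Y] (f : X → Y) : Prop :=
  (∀ x y : X, sle x y → sle (f x) (f y)) ∧
  ∀ D : Set X, ∀ x : X, DConv D x → DConv (f '' D) (f x)

/-!
Open sets are directed open, and directed open sets are upper sets for the specialization
order, since a singleton `{y}` converges to every `x ⊑ y`. Hence if preimages of open sets are
directed open, `f` is monotone, and a directed `D → x` is eventually in `f⁻¹' V` for each open
`V ∋ f x`, i.e. `f '' D → f x`. Conversely, directed continuity pulls directed open sets back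
to directed open sets directly from the definitions. Continuity pulls open sets back to open,
hence directed open, sets; and when `X` is a directed space the preimage of an open set, being
directed open, is open.
-/

section

variable {Y : Type*} [TopologicalSpace X] [TopologicalSpace Y]

lemma sle_refl (x : X) : sle x x := subset_closure rfl

lemma IsOpen.mem_of_sle {U : Set X} (hU : IsOpen U) {x y : X} (hxy : sle x y) (hx : x ∈ U) :
    y ∈ U := by
  obtain ⟨z, hzU, rfl⟩ := mem_closure_iff.mp hxy U hU hx
  exact hzU

lemma IsOpen.dOpen {U : Set X} (hU : IsOpen U) : DOpen U := by
  intro D x hD hx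
  obtain ⟨d, hd, hdU⟩ := hD.2 U hU hx
  exact ⟨d, hd, hdU d hd (sle_refl d)⟩

lemma isDirSet_singleton_s5 (y : X) : IsDirSet {y} :=
  ⟨Set.singleton_nonempty y, by
    rintro _ rfl _ rfl
    exact ⟨_, rfl, sle_refl _, sle_refl _⟩⟩

lemma dConv_singleton {x y : X} (hxy : sle x y) : DConv {y} x := by
  refine ⟨isDirSet_singleton_s5 y, fun U hU hx => ⟨y, rfl, ?_⟩⟩
  rintro e rfl -
  exact hU.mem_of_sle hxy hx

lemma DOpen.mem_of_sle {U : Set X} (hU : DOpen U) {x y : X} (hxy : sle x y) (hx : x ∈ U) :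
    y ∈ U := by
  obtain ⟨z, rfl, hzU⟩ := hU {y} x (dConv_singleton hxy) hx
  exact hzU

lemma IsDirSet.image {f : X → Y} (hf : ∀ x y, sle x y → sle (f x) (f y)) {D : Set X}
    (hD : IsDirSet D) : IsDirSet (f '' D) := by
  obtain ⟨hne, hdir⟩ := hD
  refine ⟨hne.image f, ?_⟩
  rintro _ ⟨a, ha, rfl⟩ _ ⟨b, hb, rfl⟩
  obtain ⟨c, hc, hac, hbc⟩ := hdir a ha b hb
  exact ⟨f c, ⟨c, hc, rfl⟩, hf a c hac, hf b c hbc⟩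

lemma DirCont.dOpen_preimage {f : X → Y} (hf : DirCont f) {U : Set Y} (hU : DOpen U) :
    DOpen (f ⁻¹' U) := by
  intro D x hD hx
  obtain ⟨_, ⟨d, hd, rfl⟩, hdU⟩ := hU (f '' D) (f x) (hf.2 D x hD) hx
  exact ⟨d, hd, hdU⟩

lemma dirCont_of_dOpen_preimage_isOpen {f : X → Y}
    (hf : ∀ V : Set Y, IsOpen V → DOpen (f ⁻¹' V)) : DirCont f := by
  have hmono : ∀ x y, sle x y → sle (f x) (f y) := fun x y hxy =>
    mem_closure_iff.mpr fun V hV hfx =>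
      ⟨f y, (hf V hV).mem_of_sle hxy hfx, rfl⟩
  refine ⟨hmono, fun D x hD => ⟨hD.1.image hmono, fun V hV hfx => ?_⟩⟩
  obtain ⟨d, hd, hdV⟩ := hf V hV D x hD hfx
  refine ⟨f d, ⟨d, hd, rfl⟩, ?_⟩
  rintro _ ⟨e, -, rfl⟩ hde
  exact hV.mem_of_sle hde hdV

lemma dirCont_iff_dOpen_preimage {f : X → Y} :
    DirCont f ↔ ∀ U : Set Y, DOpen U → DOpen (f ⁻¹' U) :=
  ⟨fun hf _ hU => hf.dOpen_preimage hU,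
    fun hf => dirCont_of_dOpen_preimage_isOpen fun _ hV => hf _ hV.dOpen⟩

lemma Continuous.dirCont {f : X → Y} (hf : Continuous f) : DirCont f :=
  dirCont_of_dOpen_preimage_isOpen fun _ hV => (hV.preimage hf).dOpen

lemma DirCont.continuous (hX : IsDirectedSpace X) {f : X → Y} (hf : DirCont f) :
    Continuous f :=
  continuous_def.mpr fun _ hV => hX _ (hf.dOpen_preimage hV.dOpen)

end

theorem stmt_5_general {Y : Type*} [TopologicalSpace X] [TopologicalSpace Y]
    (f : X → Y) :
    (DirCont f ↔ ∀ U : Set Y, DOpen U → DOpen (f ⁻¹' U)) ∧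
    (IsDirectedSpace X → (Continuous f ↔ DirCont f)) :=
  ⟨dirCont_iff_dOpen_preimage, fun hX => ⟨Continuous.dirCont, DirCont.continuous hX⟩⟩

/-- for T0 spaces `X`, `Y` with `Y` a directed space, `f` is
directed continuous iff preimages of directed opens are directed open; and if
`X` is also a directed space, continuity is equivalent to directed continuity. -/
theorem stmt_5 {Y : Type*} [TopologicalSpace X] [T0Space X] [TopologicalSpace Y] [T0Space Y]
    (hY : IsDirectedSpace Y) (f : X → Y) :
    (DirCont f ↔ ∀ U : Set Y, DOpen U → DOpen (f ⁻¹' U)) ∧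
    (IsDirectedSpace X → (Continuous f ↔ DirCont f)) :=
  stmt_5_general f
end

section
/- Let P be a dcpo with Scott topology, C(P) its lattice of nonempty Scott-closed subsets ordered by inclusion, and LP = {↓F : F nonempty finite ⊆ P} ⊆ C(P). Then the relative Scott topology σ(C(P))|_{LP} is contained in the ⇒_L-convergence topology O_{⇒L}(LP). Moreover σ(C(P))|_{LP} = O_{⇒L}(LP) if and only if for every 𝒱 ∈ O_{⇒L}(LP), the set ↑_{C(P)}𝒱 = {A ∈ C(P) : ∃ ↓F ∈ 𝒱, ↓F ⊆ A} is Scott open in C(P). -/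
/-!
Directed suprema in `C(P)` are closures of unions, and every `S ∈ C(P)` is the directed supremum
of the `↓F` with `F ⊆ S` finite. Hence a Scott-open `𝒲 ⊆ C(P)` is recovered from its trace on `LP`
as `𝒲 = ↑(𝒲 ∩ LP)`, and if `𝒟 ⇒_L ↓F` then `↓F ⊆ sup 𝒟`, so `𝒲 ∋ ↓F` meets `𝒟`. Conversely a
`⇒_L`-open `𝒱` is an upper set of `LP`, because the constant family `{A}` converges to every
`↓F ⊆ A`; thus `𝒱 = ↑𝒱 ∩ LP`, and `𝒱` is a trace of a Scott-open set iff `↑𝒱` is Scott open.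
-/

variable {X : Type*}

/-- Down-closure with respect to the specialization order. -/
def dcl [TopologicalSpace X] (F : Set X) : Set X := {x | ∃ a ∈ F, sle x a}

/-- Membership in `LX`: down-closures of nonempty finite sets. -/
def InLX [TopologicalSpace X] (A : Set X) : Prop :=
  ∃ F : Finset X, F.Nonempty ∧ A = dcl (F : Set X)

/-- A directed (under inclusion) family of elements of `LX`. -/
def LDir [TopologicalSpace X] (𝒟 : Set (Set X)) : Prop :=
  (∀ B ∈ 𝒟, InLX B) ∧ 𝒟.Nonempty ∧ ∀ A ∈ 𝒟, ∀ B ∈ 𝒟, ∃ C ∈ 𝒟, A ⊆ C ∧ B ⊆ C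

/-- The convergence `𝒟 ⇒_L ↓F`. -/
def LConv [TopologicalSpace X] (𝒟 : Set (Set X)) (A : Set X) : Prop :=
  LDir 𝒟 ∧ ∃ F : Finset X, F.Nonempty ∧ A = dcl (F : Set X) ∧
    ∀ a ∈ F, ∃ D : Set X, D ⊆ ⋃₀ 𝒟 ∧ DConv D a

/-- `⇒_L`-convergence open subsets of `LX`. -/
def LOpen [TopologicalSpace X] (𝒰 : Set (Set X)) : Prop :=
  (∀ A ∈ 𝒰, InLX A) ∧ ∀ 𝒟 A, LConv 𝒟 A → A ∈ 𝒰 → (𝒟 ∩ 𝒰).Nonempty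

/-- Scott-open subsets of a preordered set. -/
def ScottOpens [Preorder X] (U : Set X) : Prop :=
  IsUpperSet U ∧ ∀ D : Set X, D.Nonempty → DirectedOn (· ≤ ·) D →
    ∀ a, IsLUB D a → a ∈ U → (D ∩ U).Nonempty

/-- Scott-closed subsets. -/
def ScottClosedSet [Preorder X] (A : Set X) : Prop :=
  IsLowerSet A ∧ ∀ D : Set X, D ⊆ A → D.Nonempty → DirectedOn (· ≤ ·) D →
    ∀ a, IsLUB D a → a ∈ A

/-- Nonempty Scott-closed set (element of `C(P)`). -/
def IsCl [Preorder X] (A : Set X) : Prop := A.Nonempty ∧ ScottClosedSet A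

/-- `S` is the least upper bound in `C(P)` (ordered by inclusion) of the family `𝒟`. -/
def IsLubCl [Preorder X] (𝒟 : Set (Set X)) (S : Set X) : Prop :=
  IsCl S ∧ (∀ A ∈ 𝒟, A ⊆ S) ∧ ∀ T, IsCl T → (∀ A ∈ 𝒟, A ⊆ T) → S ⊆ T

/-- Scott-open family of nonempty Scott-closed sets, i.e. Scott-open subsets of `C(P)`. -/
def SOC [Preorder X] (𝒲 : Set (Set X)) : Prop :=
  (∀ A ∈ 𝒲, IsCl A) ∧
  (∀ A B, A ∈ 𝒲 → IsCl B → A ⊆ B → B ∈ 𝒲) ∧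
  ∀ 𝒟 S, (∀ A ∈ 𝒟, IsCl A) → 𝒟.Nonempty → DirectedOn (· ⊆ ·) 𝒟 →
    IsLubCl 𝒟 S → S ∈ 𝒲 → (𝒟 ∩ 𝒲).Nonempty

/-- The way-below relation. -/
def wayBelow [Preorder X] (y x : X) : Prop :=
  ∀ D : Set X, D.Nonempty → DirectedOn (· ≤ ·) D → ∀ a, IsLUB D a → x ≤ a → ∃ d ∈ D, y ≤ d

/-- A continuous domain: a dcpo in which every element is the directed supremum
of the elements way below it. -/
def IsContinuousDomain (X : Type*) [Preorder X] : Prop :=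
  (∀ D : Set X, D.Nonempty → DirectedOn (· ≤ ·) D → ∃ a, IsLUB D a) ∧
  ∀ x : X, {y | wayBelow y x}.Nonempty ∧ DirectedOn (· ≤ ·) {y | wayBelow y x} ∧
    IsLUB {y | wayBelow y x} x

section Specialization

variable [TopologicalSpace X]

lemma dcl_eq_biUnion (F : Set X) : dcl F = ⋃ a ∈ F, closure {a} := by
  ext x
  simp [dcl, sle]

lemma isClosed_dcl (F : Finset X) : IsClosed (dcl (F : Set X)) := by
  rw [dcl_eq_biUnion]
  exact F.finite_toSet.isClosed_biUnion fun _ _ => isClosed_closure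

lemma subset_dcl (F : Set X) : F ⊆ dcl F := fun a ha => ⟨a, ha, subset_closure rfl⟩

lemma dcl_mono {F G : Set X} (h : F ⊆ G) : dcl F ⊆ dcl G :=
  fun _ ⟨a, ha, hxa⟩ => ⟨a, h ha, hxa⟩

lemma dcl_subset_of_isClosed {F S : Set X} (hS : IsClosed S) (hF : F ⊆ S) : dcl F ⊆ S := by
  rw [dcl_eq_biUnion]
  exact Set.iUnion₂_subset fun a ha => closure_minimal (Set.singleton_subset_iff.mpr (hF ha)) hS

lemma DConv.mem_closure {D : Set X} {x : X} (h : DConv D x) : x ∈ closure D := by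
  rw [mem_closure_iff]
  intro U hU hxU
  obtain ⟨d, hdD, hd⟩ := h.2 U hU hxU
  exact ⟨d, hd d hdD (subset_closure rfl), hdD⟩

lemma LConv.subset_closure_sUnion {𝒟 : Set (Set X)} {A : Set X} (h : LConv 𝒟 A) :
    A ⊆ closure (⋃₀ 𝒟) := by
  obtain ⟨-, F, -, rfl, hlim⟩ := h
  refine dcl_subset_of_isClosed isClosed_closure fun a ha => ?_
  obtain ⟨D, hD, hDa⟩ := hlim a ha
  exact closure_mono hD hDa.mem_closure

lemma lConv_singleton {A B : Set X} (hA : InLX A) (hB : InLX B) (hBA : B ⊆ A) :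
    LConv {A} B := by
  obtain ⟨G, hG, rfl⟩ := hB
  refine ⟨⟨by simpa using hA, Set.singleton_nonempty A, ?_⟩, G, hG, rfl, fun a ha => ?_⟩
  · exact fun C hC C' hC' =>
      ⟨A, rfl, (Set.eq_of_mem_singleton hC).subset, (Set.eq_of_mem_singleton hC').subset⟩
  · refine ⟨{a}, by simpa using hBA (subset_dcl _ ha), ⟨Set.singleton_nonempty a, ?_⟩, ?_⟩
    · intro p hp q hq
      rw [Set.eq_of_mem_singleton hp, Set.eq_of_mem_singleton hq]
      exact ⟨a, rfl, subset_closure rfl, subset_closure rfl⟩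
    · exact fun U _ haU => ⟨a, rfl, fun e he _ => he ▸ haU⟩

lemma LOpen.mem_of_subset {𝒱 : Set (Set X)} (h𝒱 : LOpen 𝒱) {A B : Set X} (hB : B ∈ 𝒱)
    (hA : InLX A) (hBA : B ⊆ A) : A ∈ 𝒱 := by
  obtain ⟨C, hC, hC𝒱⟩ := h𝒱.2 {A} B (lConv_singleton hA (h𝒱.1 B hB) hBA) hB
  rwa [Set.mem_singleton_iff.mp hC] at hC𝒱

end Specialization

/-- The trace `𝒲|_{LX}` of a family of sets on `LX`. -/
def restrictLX [TopologicalSpace X] (𝒲 : Set (Set X)) : Set (Set X) := {A | A ∈ 𝒲 ∧ InLX A}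

/-- The upper closure `↑_{C(P)}𝒱` of `𝒱` in `C(P)`. -/
def upperCl [Preorder X] (𝒱 : Set (Set X)) : Set (Set X) := {A | IsCl A ∧ ∃ B ∈ 𝒱, B ⊆ A}

lemma scottOpens_compl_iff [Preorder X] {C : Set X} : ScottOpens Cᶜ ↔ ScottClosedSet C := by
  simp only [ScottOpens, ScottClosedSet, isUpperSet_compl, Set.inter_compl_nonempty_iff,
    Set.mem_compl_iff]
  refine and_congr_right fun _ => forall_congr' fun D => ?_
  constructor
  · intro h hDC hne hdir a hlub
    by_contra ha
    exact h hne hdir a hlub ha hDC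
  · intro h hne hdir a hlub ha hDC
    exact ha (h hDC hne hdir a hlub)

section Scott

variable {P : Type*} [Preorder P] [TopologicalSpace P]

lemma isClosed_iff_scottClosedSet (hscott : ∀ U : Set P, IsOpen U ↔ ScottOpens U) {C : Set P} :
    IsClosed C ↔ ScottClosedSet C := by
  rw [← isOpen_compl_iff, hscott, scottOpens_compl_iff]

lemma isCl_iff (hscott : ∀ U : Set P, IsOpen U ↔ ScottOpens U) {A : Set P} :
    IsCl A ↔ A.Nonempty ∧ IsClosed A := by
  rw [IsCl, isClosed_iff_scottClosedSet hscott]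

lemma isCl_dcl (hscott : ∀ U : Set P, IsOpen U ↔ ScottOpens U) {F : Finset P}
    (hF : F.Nonempty) : IsCl (dcl (F : Set P)) :=
  (isCl_iff hscott).mpr ⟨hF.to_set.mono (subset_dcl _), isClosed_dcl F⟩

lemma InLX.isCl (hscott : ∀ U : Set P, IsOpen U ↔ ScottOpens U) {A : Set P} (hA : InLX A) :
    IsCl A := by
  obtain ⟨F, hF, rfl⟩ := hA
  exact isCl_dcl hscott hF

lemma isLubCl_closure_sUnion (hscott : ∀ U : Set P, IsOpen U ↔ ScottOpens U)
    {𝒟 : Set (Set P)} (h𝒟 : ∀ A ∈ 𝒟, IsCl A) (hne : 𝒟.Nonempty) :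
    IsLubCl 𝒟 (closure (⋃₀ 𝒟)) := by
  obtain ⟨A, hA⟩ := hne
  refine ⟨(isCl_iff hscott).mpr ⟨((h𝒟 A hA).1.mono (Set.subset_sUnion_of_mem hA)).closure,
    isClosed_closure⟩, fun B hB => (Set.subset_sUnion_of_mem hB).trans subset_closure,
    fun T hT hTub => closure_minimal (Set.sUnion_subset hTub) ((isCl_iff hscott).mp hT).2⟩

lemma SOC.exists_inLX_subset (hscott : ∀ U : Set P, IsOpen U ↔ ScottOpens U)
    {𝒲 : Set (Set P)} (h𝒲 : SOC 𝒲) {S : Set P} (hS : S ∈ 𝒲) :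
    ∃ B ∈ 𝒲, InLX B ∧ B ⊆ S := by
  classical
  have hSclosed : IsClosed S := ((isCl_iff hscott).mp (h𝒲.1 S hS)).2
  set ℱ : Set (Set P) := (fun F : Finset P => dcl (F : Set P)) '' {F | F.Nonempty ∧ ↑F ⊆ S}
  have hℱS : ∀ B ∈ ℱ, B ⊆ S := by
    rintro _ ⟨F, ⟨-, hFS⟩, rfl⟩
    exact dcl_subset_of_isClosed hSclosed hFS
  have hsingleton : ∀ x ∈ S, dcl (({x} : Finset P) : Set P) ∈ ℱ := fun x hx =>
    ⟨{x}, ⟨Finset.singleton_nonempty x, by simpa using hx⟩, rfl⟩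
  have hdir : DirectedOn (· ⊆ ·) ℱ := by
    rintro _ ⟨F₁, ⟨hF₁, hF₁S⟩, rfl⟩ _ ⟨F₂, ⟨-, hF₂S⟩, rfl⟩
    refine ⟨_, ⟨F₁ ∪ F₂, ⟨hF₁.mono Finset.subset_union_left, ?_⟩, rfl⟩, ?_, ?_⟩
    · rw [Finset.coe_union]
      exact Set.union_subset hF₁S hF₂S
    · exact dcl_mono (by simp)
    · exact dcl_mono (by simp)
  have hlub : IsLubCl ℱ S := ⟨h𝒲.1 S hS, hℱS, fun T _ hTub x hx =>
    hTub _ (hsingleton x hx) (subset_dcl _ (by simp))⟩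
  have hℱCl : ∀ B ∈ ℱ, IsCl B := by
    rintro _ ⟨F, ⟨hF, -⟩, rfl⟩
    exact isCl_dcl hscott hF
  obtain ⟨x, hx⟩ := (h𝒲.1 S hS).1
  obtain ⟨B, hBℱ, hB𝒲⟩ := h𝒲.2.2 ℱ S hℱCl ⟨_, hsingleton x hx⟩ hdir hlub hS
  obtain ⟨F, ⟨hF, hFS⟩, rfl⟩ := hBℱ
  exact ⟨_, hB𝒲, ⟨F, hF, rfl⟩, dcl_subset_of_isClosed hSclosed hFS⟩

lemma lOpen_restrictLX (hscott : ∀ U : Set P, IsOpen U ↔ ScottOpens U) {𝒲 : Set (Set P)}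
    (h𝒲 : SOC 𝒲) : LOpen (restrictLX 𝒲) := by
  refine ⟨fun A hA => hA.2, ?_⟩
  rintro 𝒟 A hconv ⟨hA𝒲, -⟩
  obtain ⟨hLX, hne, hdir⟩ := hconv.1
  have hCl : ∀ B ∈ 𝒟, IsCl B := fun B hB => (hLX B hB).isCl hscott
  have hlub := isLubCl_closure_sUnion hscott hCl hne
  have hS𝒲 : closure (⋃₀ 𝒟) ∈ 𝒲 := h𝒲.2.1 A _ hA𝒲 hlub.1 hconv.subset_closure_sUnion
  obtain ⟨B, hB𝒟, hB𝒲⟩ := h𝒲.2.2 𝒟 _ hCl hne hdir hlub hS𝒲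
  exact ⟨B, hB𝒟, hB𝒲, hLX B hB𝒟⟩

lemma upperCl_restrictLX (hscott : ∀ U : Set P, IsOpen U ↔ ScottOpens U) {𝒲 : Set (Set P)}
    (h𝒲 : SOC 𝒲) : upperCl (restrictLX 𝒲) = 𝒲 := by
  ext A
  constructor
  · rintro ⟨hA, B, ⟨hB𝒲, -⟩, hBA⟩
    exact h𝒲.2.1 B A hB𝒲 hA hBA
  · intro hA𝒲
    obtain ⟨B, hB𝒲, hBLX, hBA⟩ := h𝒲.exists_inLX_subset hscott hA𝒲
    exact ⟨h𝒲.1 A hA𝒲, B, ⟨hB𝒲, hBLX⟩, hBA⟩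

lemma LOpen.restrictLX_upperCl (hscott : ∀ U : Set P, IsOpen U ↔ ScottOpens U)
    {𝒱 : Set (Set P)} (h𝒱 : LOpen 𝒱) : restrictLX (upperCl 𝒱) = 𝒱 := by
  ext A
  constructor
  · rintro ⟨⟨-, B, hB𝒱, hBA⟩, hA⟩
    exact h𝒱.mem_of_subset hB𝒱 hA hBA
  · intro hA𝒱
    have hA := h𝒱.1 A hA𝒱
    exact ⟨⟨hA.isCl hscott, A, hA𝒱, subset_rfl⟩, hA⟩

end Scott

theorem stmt_13_general {P : Type*} [PartialOrder P] [TopologicalSpace P]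
    (hscott : ∀ U : Set P, IsOpen U ↔ ScottOpens U) :
    (∀ 𝒲 : Set (Set P), SOC 𝒲 → LOpen {A | A ∈ 𝒲 ∧ InLX A}) ∧
    ((∀ 𝒱 : Set (Set P), LOpen 𝒱 → ∃ 𝒲, SOC 𝒲 ∧ 𝒱 = {A | A ∈ 𝒲 ∧ InLX A}) ↔
      (∀ 𝒱 : Set (Set P), LOpen 𝒱 → SOC {A | IsCl A ∧ ∃ B ∈ 𝒱, B ⊆ A})) := by
  refine ⟨fun _ => lOpen_restrictLX hscott, ⟨fun h 𝒱 h𝒱 => ?_, fun h 𝒱 h𝒱 => ?_⟩⟩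
  · obtain ⟨𝒲, h𝒲, rfl⟩ := h 𝒱 h𝒱
    change SOC (upperCl (restrictLX 𝒲))
    rwa [upperCl_restrictLX hscott h𝒲]
  · exact ⟨_, h 𝒱 h𝒱, (h𝒱.restrictLX_upperCl hscott).symm⟩

/-- for a dcpo `P` with the Scott topology, the relative Scott
topology of `C(P)` on `LP` is contained in the `⇒_L`-topology, with equality iff
`↑_{C(P)}𝒱` is Scott open for every `⇒_L`-open `𝒱`. -/
theorem stmt_13 {P : Type*} [PartialOrder P] [TopologicalSpace P]
    (hscott : ∀ U : Set P, IsOpen U ↔ ScottOpens U)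
    (hdcpo : ∀ D : Set P, D.Nonempty → DirectedOn (· ≤ ·) D → ∃ a, IsLUB D a) :
    (∀ 𝒲 : Set (Set P), SOC 𝒲 → LOpen {A | A ∈ 𝒲 ∧ InLX A}) ∧
    ((∀ 𝒱 : Set (Set P), LOpen 𝒱 → ∃ 𝒲, SOC 𝒲 ∧ 𝒱 = {A | A ∈ 𝒲 ∧ InLX A}) ↔
      (∀ 𝒱 : Set (Set P), LOpen 𝒱 → SOC {A | IsCl A ∧ ∃ B ∈ 𝒱, B ⊆ A})) :=
  stmt_13_general hscott
end

section
/- Let X be a continuous domain with Scott topology, and UX = {↑F : F nonempty finite ⊆ X} ordered by reverse inclusion. Then for every directed family ℱ ⊆ UX and ↑F ∈ UX, one has ℱ ⇒_U ↑F if and only if ⋂{↑G : ↑G ∈ ℱ} ⊆ ↑F. -/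
variable {X : Type*}

/-- Up-closure with respect to the specialization order. -/
def ucl [TopologicalSpace X] (F : Set X) : Set X := {x | ∃ a ∈ F, sle a x}

/-- Membership in `UX`: up-closures of nonempty finite sets. -/
def InUX [TopologicalSpace X] (A : Set X) : Prop :=
  ∃ F : Finset X, F.Nonempty ∧ A = ucl (F : Set X)

/-- A family of elements of `UX`, directed with respect to reverse inclusion. -/
def UDir [TopologicalSpace X] (ℱ : Set (Set X)) : Prop :=
  (∀ B ∈ ℱ, InUX B) ∧ ℱ.Nonempty ∧ ∀ A ∈ ℱ, ∀ B ∈ ℱ, ∃ C ∈ ℱ, C ⊆ A ∧ C ⊆ B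

/-- The convergence `ℱ ⇒_U ↑F`. -/
def UConv [TopologicalSpace X] (ℱ : Set (Set X)) (A : Set X) : Prop :=
  UDir ℱ ∧ ∃ F : Finset X, F.Nonempty ∧ A = ucl (F : Set X) ∧
    ∃ (n : ℕ) (D : Fin n → Set X),
      (∀ i, ∃ a ∈ F, DConv (D i) a) ∧
      (∀ a ∈ F, ∃ i, DConv (D i) a) ∧
      (∀ d : Fin n → X, (∀ i, d i ∈ D i) → ∃ B ∈ ℱ, B ⊆ ⋃ i, ucl {d i})

/-- `⇒_U`-convergence open subsets of `UX`. -/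
def UOpen [TopologicalSpace X] (𝒰 : Set (Set X)) : Prop :=
  (∀ A ∈ 𝒰, InUX A) ∧ ∀ ℱ A, UConv ℱ A → A ∈ 𝒰 → (ℱ ∩ 𝒰).Nonempty

/-!
(⇒) holds in every space: if `x ∈ ⋂ℱ` lies above no point of `F`, each `Dᵢ` eventually leaves
the closed set `closure {x}`, and a choice of such `dᵢ` produces a member of `ℱ` that misses `x`.
(⇐) Take `Dᵢ = ↡aᵢ` for `F = {a₁, …, aₙ}`. For any choice `dᵢ ≪ aᵢ` we have
`⋂ℱ ⊆ ↑F ⊆ ⋃ᵢ ↟dᵢ`, a Scott-open set, so well-filteredness of the Scott topology (a consequence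
of Rudin's lemma) puts some member of `ℱ` inside `⋃ᵢ ↟dᵢ ⊆ ⋃ᵢ ↑dᵢ`.
-/
open Set Topology

section ScottTopology

variable {P : Type*} [Preorder P]

lemma isOpen_scott_iff_scottOpens {U : Set P} :
    IsOpen[scott P univ] U ↔ ScottOpens U := by
  let _ : TopologicalSpace P := scott P univ
  have : IsScott P univ := ⟨rfl⟩
  rw [IsScott.isOpen_iff_isUpperSet_and_dirSupInaccOn (D := univ), dirSupInaccOn_univ]
  rfl

variable [TopologicalSpace P]

lemma isScott_of_isOpen_iff_scottOpens (hscott : ∀ U : Set P, IsOpen U ↔ ScottOpens U) :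
    IsScott P univ :=
  ⟨TopologicalSpace.ext_iff.2 fun U => (hscott U).trans isOpen_scott_iff_scottOpens.symm⟩

lemma sle_iff_le (hscott : ∀ U : Set P, IsOpen U ↔ ScottOpens U) {x y : P} :
    sle x y ↔ x ≤ y := by
  have := isScott_of_isOpen_iff_scottOpens hscott
  rw [sle, IsScott.closure_singleton, mem_Iic]

lemma ucl_eq_upperClosure (hscott : ∀ U : Set P, IsOpen U ↔ ScottOpens U) (s : Set P) :
    ucl s = upperClosure s := by
  ext x
  simp only [ucl, sle_iff_le hscott, mem_ofPred_eq, SetLike.mem_coe, mem_upperClosure]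

end ScottTopology

section WayBelow

variable {P : Type*} [Preorder P] {x x' y y' : P}

lemma wayBelow.le (h : wayBelow y x) : y ≤ x := by
  obtain ⟨d, rfl, hyd⟩ :=
    h {x} (singleton_nonempty x) (directedOn_singleton x) x isLUB_singleton le_rfl
  exact hyd

lemma wayBelow.mono (hy : y' ≤ y) (hx : x ≤ x') (h : wayBelow y x) : wayBelow y' x' :=
  fun D hD_ne hD_dir a ha hx'a =>
    (h D hD_ne hD_dir a ha (hx.trans hx'a)).imp fun _ hd => ⟨hd.1, hy.trans hd.2⟩

lemma exists_wayBelow_wayBelow (hcont : IsContinuousDomain P) (h : wayBelow y x) :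
    ∃ z, wayBelow y z ∧ wayBelow z x := by
  -- `x` is also the directed supremum of `{w | ∃ z, w ≪ z ≪ x}`, which `y ≪ x` must then reach
  let E := {w : P | ∃ z, wayBelow w z ∧ wayBelow z x}
  have hE_ne : E.Nonempty := by
    obtain ⟨z, hz⟩ := (hcont.2 x).1
    obtain ⟨w, hw⟩ := (hcont.2 z).1
    exact ⟨w, z, hw, hz⟩
  have hE_dir : DirectedOn (· ≤ ·) E := by
    rintro w₁ ⟨z₁, hw₁, hz₁⟩ w₂ ⟨z₂, hw₂, hz₂⟩
    obtain ⟨z, hz, hz₁z, hz₂z⟩ := (hcont.2 x).2.1 z₁ hz₁ z₂ hz₂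
    obtain ⟨w, hw, hw₁w, hw₂w⟩ :=
      (hcont.2 z).2.1 w₁ (hw₁.mono le_rfl hz₁z) w₂ (hw₂.mono le_rfl hz₂z)
    exact ⟨w, ⟨z, hw, hz⟩, hw₁w, hw₂w⟩
  have hE_lub : IsLUB E x := by
    refine ⟨fun w ⟨z, hwz, hzx⟩ => hwz.le.trans hzx.le, fun u hu => ?_⟩
    exact (hcont.2 x).2.2.2 fun z hz => (hcont.2 z).2.2.2 fun w hw => hu ⟨z, hw, hz⟩
  obtain ⟨w, ⟨z, hwz, hzx⟩, hyw⟩ := h E hE_ne hE_dir x hE_lub le_rfl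
  exact ⟨z, hwz.mono hyw le_rfl, hzx⟩

lemma scottOpens_setOf_wayBelow (hcont : IsContinuousDomain P) (y : P) :
    ScottOpens {z | wayBelow y z} := by
  refine ⟨fun a b hab ha => ha.mono le_rfl hab, fun D hD_ne hD_dir a ha hya => ?_⟩
  obtain ⟨z, hyz, hza⟩ := exists_wayBelow_wayBelow hcont hya
  obtain ⟨d, hdD, hzd⟩ := hza D hD_ne hD_dir a ha le_rfl
  exact ⟨d, hdD, hyz.mono le_rfl hzd⟩

lemma dConv_setOf_wayBelow [TopologicalSpace P] (hscott : ∀ U : Set P, IsOpen U ↔ ScottOpens U)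
    (hcont : IsContinuousDomain P) (x : P) : DConv {y | wayBelow y x} x := by
  obtain ⟨hne, hdir, hlub⟩ := hcont.2 x
  refine ⟨⟨hne, fun u hu v hv => ?_⟩, fun U hU hxU => ?_⟩
  · obtain ⟨w, hw, huw, hvw⟩ := hdir u hu v hv
    exact ⟨w, hw, (sle_iff_le hscott).2 huw, (sle_iff_le hscott).2 hvw⟩
  · obtain ⟨d, hdD, hdU⟩ := ((hscott U).1 hU).2 _ hne hdir x hlub hxU
    exact ⟨d, hdD, fun e _ hde => ((hscott U).1 hU).1 ((sle_iff_le hscott).1 hde) hdU⟩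

end WayBelow

section Rudin

lemma IsChain.nonempty_sInter_of_finite {α : Type*} {c : Set (Set α)} (hc : IsChain (· ⊆ ·) c)
    {s : Set α} (hs : s ∈ c) (hs_fin : s.Finite) (hne : ∀ t ∈ c, t.Nonempty) :
    (⋂₀ c).Nonempty := by
  obtain ⟨m, hm⟩ := (hs_fin.finite_subsets.subset fun t ht => ht.2 :
    {t | t ∈ c ∧ t ⊆ s}.Finite).exists_minimal ⟨s, hs, subset_rfl⟩
  refine (hne m hm.1.1).mono fun x hx => mem_sInter.2 fun t ht => ?_
  rcases hc.total hm.1.1 ht with hmt | htm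
  · exact hmt hx
  · exact hm.2 ⟨ht, htm.trans hm.1.2⟩ htm hx

variable {ι P : Type*} [Preorder P]

/-- The families over which Zorn's lemma is applied in Rudin's lemma. -/
structure IsRudinSelection (H R : ι → Set P) : Prop where
  subset : R ≤ H
  nonempty : ∀ i, (R i).Nonempty
  subset_upperClosure : ∀ i k, H k ⊆ upperClosure (H i) → R k ⊆ upperClosure (R i)

variable {H : ι → Set P}

lemma isRudinSelection_self (hne : ∀ i, (H i).Nonempty) : IsRudinSelection H H :=
  ⟨le_rfl, hne, fun _ _ h => h⟩

lemma IsRudinSelection.iInter_of_isChain (hfin : ∀ i, (H i).Finite) {c : Set (ι → Set P)}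
    (hc : IsChain (· ≤ ·) c) (hcR : ∀ R ∈ c, IsRudinSelection H R) {R₀ : ι → Set P}
    (hR₀ : R₀ ∈ c) : IsRudinSelection H fun i => ⋂ R ∈ c, R i := by
  have hfin' : ∀ i, (R₀ i).Finite := fun i => (hfin i).subset ((hcR R₀ hR₀).subset i)
  refine ⟨fun i => (biInter_subset_of_mem hR₀).trans ((hcR R₀ hR₀).subset i), fun i => ?_,
    fun i k hik x hx => ?_⟩
  · rw [← sInter_image]
    exact (Monotone.isChain_image (Function.monotone_eval i) hc).nonempty_sInter_of_finite
      (mem_image_of_mem _ hR₀) (hfin' i) (by rintro _ ⟨R, hR, rfl⟩; exact (hcR R hR).nonempty i)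
  · have hchain : IsChain (· ⊆ ·) ((fun R => R i ∩ Iic x) '' c) :=
      Monotone.isChain_image (fun _ _ h => inter_subset_inter_left _ (Pi.le_def.1 h i)) hc
    obtain ⟨f, hf⟩ := hchain.nonempty_sInter_of_finite (mem_image_of_mem _ hR₀)
      ((hfin' i).subset inter_subset_left) (by
        rintro _ ⟨R, hR, rfl⟩
        obtain ⟨f, hf, hfx⟩ := (hcR R hR).subset_upperClosure i k hik (mem_iInter₂.1 hx R hR)
        exact ⟨f, hf, hfx⟩)
    rw [sInter_image] at hf
    exact ⟨f, mem_iInter₂.2 fun R hR => (mem_iInter₂.1 hf R hR).1,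
      (mem_iInter₂.1 hf R₀ hR₀).2⟩

lemma exists_subset_Ici_of_minimal_isRudinSelection {M : ι → Set P}
    (hM : Minimal (IsRudinSelection H) M) {i : ι} {x : P} (hx : x ∈ M i) : ∃ k, M k ⊆ Ici x := by
  by_contra! hcon
  have hM' : IsRudinSelection H fun k => M k \ Ici x :=
    { subset := fun k => sdiff_subset.trans (hM.1.subset k)
      nonempty := fun k => by
        obtain ⟨y, hy, hyx⟩ := not_subset.1 (hcon k)
        exact ⟨y, hy, hyx⟩
      subset_upperClosure := fun j k hjk y hy => by
        obtain ⟨f, hf, hfy⟩ := hM.1.subset_upperClosure j k hjk hy.1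
        exact ⟨f, ⟨hf, fun hxf => hy.2 (le_trans hxf hfy)⟩, hfy⟩ }
  exact (hM.2 hM' (fun k => sdiff_subset) i hx).2 le_rfl

theorem rudin_lemma (hfin : ∀ i, (H i).Finite) (hne : ∀ i, (H i).Nonempty)
    (hdir : ∀ i j, ∃ k, H k ⊆ upperClosure (H i) ∧ H k ⊆ upperClosure (H j)) :
    ∃ D ⊆ ⋃ i, H i, DirectedOn (· ≤ ·) D ∧ ∀ i, (D ∩ H i).Nonempty := by
  obtain ⟨M, -, hM⟩ := zorn_le_nonempty₀ (α := (ι → Set P)ᵒᵈ)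
    {R | IsRudinSelection H (OrderDual.ofDual R)}
    (fun c hcS hc R hR => ⟨_, IsRudinSelection.iInter_of_isChain hfin hc.symm hcS hR,
      fun _ hR' _ => biInter_subset_of_mem hR'⟩) (OrderDual.toDual H) (isRudinSelection_self hne)
  have hM : Minimal (IsRudinSelection H) (OrderDual.ofDual M) := hM
  refine ⟨⋃ i, M i, iUnion_mono hM.1.subset, ?_, fun i => ?_⟩
  · intro x hx y hy
    obtain ⟨i, hx⟩ := mem_iUnion.1 hx
    obtain ⟨j, hy⟩ := mem_iUnion.1 hy
    obtain ⟨kx, hkx⟩ := exists_subset_Ici_of_minimal_isRudinSelection hM hx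
    obtain ⟨ky, hky⟩ := exists_subset_Ici_of_minimal_isRudinSelection hM hy
    obtain ⟨k, hkkx, hkky⟩ := hdir kx ky
    obtain ⟨z, hz⟩ := hM.1.nonempty k
    obtain ⟨fx, hfx, hfxz⟩ := hM.1.subset_upperClosure kx k hkkx hz
    obtain ⟨fy, hfy, hfyz⟩ := hM.1.subset_upperClosure ky k hkky hz
    exact ⟨z, mem_iUnion.2 ⟨k, hz⟩, (hkx hfx).trans hfxz, (hky hfy).trans hfyz⟩
  · obtain ⟨x, hx⟩ := hM.1.nonempty i
    exact ⟨x, mem_iUnion.2 ⟨i, hx⟩, hM.1.subset i hx⟩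

end Rudin

section WellFiltered

variable {P : Type*} [Preorder P]

theorem exists_mem_subset_of_sInter_subset
    (hdcpo : ∀ D : Set P, D.Nonempty → DirectedOn (· ≤ ·) D → ∃ a, IsLUB D a)
    {ℱ : Set (Set P)} (hℱ : ∀ B ∈ ℱ, ∃ G : Set P, G.Finite ∧ B = upperClosure G)
    (hℱ_ne : ℱ.Nonempty) (hℱ_dir : DirectedOn (· ⊇ ·) ℱ) {U : Set P} (hU : ScottOpens U)
    (h : ⋂₀ ℱ ⊆ U) : ∃ B ∈ ℱ, B ⊆ U := by
  by_contra! hcon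
  choose G hG_fin hG using fun B : ℱ => hℱ B B.2
  let H : ℱ → Set P := fun B => G B \ U
  have hH_ne : ∀ B, (H B).Nonempty := fun B => by
    by_contra! hempty
    refine hcon B B.2 ?_
    rw [hG B]
    rintro x ⟨a, ha, hax⟩
    exact hU.1 hax (sdiff_eq_empty.1 hempty ha)
  have hH_antitone : ∀ B E : ℱ, E.1 ⊆ B.1 → H E ⊆ upperClosure (H B) := by
    intro B E hEB x ⟨hx, hxU⟩
    have hxB : x ∈ B.1 := hEB <| (hG E).symm ▸ subset_upperClosure hx
    rw [hG B] at hxB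
    obtain ⟨a, ha, hax⟩ := hxB
    exact ⟨a, ⟨ha, fun haU => hxU (hU.1 hax haU)⟩, hax⟩
  have hH_dir : ∀ B C : ℱ, ∃ E, H E ⊆ upperClosure (H B) ∧ H E ⊆ upperClosure (H C) := by
    intro B C
    obtain ⟨E, hE, hEB, hEC⟩ := hℱ_dir B B.2 C C.2
    exact ⟨⟨E, hE⟩, hH_antitone B ⟨E, hE⟩ hEB, hH_antitone C ⟨E, hE⟩ hEC⟩
  obtain ⟨D, hDH, hD_dir, hD_meets⟩ :=
    rudin_lemma (fun B => (hG_fin B).subset sdiff_subset) hH_ne hH_dir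
  have hD_ne : D.Nonempty := (hD_meets ⟨_, hℱ_ne.some_mem⟩).mono inter_subset_left
  obtain ⟨d, hd⟩ := hdcpo D hD_ne hD_dir
  have hdU : d ∈ U := h fun B hB => by
    obtain ⟨x, hxD, hxG, -⟩ := hD_meets ⟨B, hB⟩
    rw [show B = _ from hG ⟨B, hB⟩]
    exact ⟨x, hxG, hd.1 hxD⟩
  obtain ⟨x, hxD, hxU⟩ := hU.2 D hD_ne hD_dir d hd hdU
  obtain ⟨B, -, hxU'⟩ := mem_iUnion.1 (hDH hxD)
  exact hxU' hxU

end WellFiltered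

theorem sInter_subset_of_uConv [TopologicalSpace X] {ℱ : Set (Set X)} {A : Set X}
    (h : UConv ℱ A) : ⋂₀ ℱ ⊆ A := by
  obtain ⟨-, F, -, rfl, n, D, hD_conv, -, hD_cover⟩ := h
  intro x hx
  by_contra hxF
  have hd : ∀ i, ∃ d ∈ D i, ¬ sle d x := fun i => by
    obtain ⟨a, haF, ha⟩ := hD_conv i
    obtain ⟨d, hdD, hd⟩ := ha.2 _ isClosed_closure.isOpen_compl fun hax => hxF ⟨a, haF, hax⟩
    exact ⟨d, hdD, hd d hdD (subset_closure rfl)⟩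
  choose d hdD hdx using hd
  obtain ⟨B, hB, hB_sub⟩ := hD_cover d hdD
  obtain ⟨i, a, rfl, hax⟩ := mem_iUnion.1 (hB_sub (hx B hB))
  exact hdx i hax

theorem uConv_of_sInter_subset {P : Type*} [Preorder P] [TopologicalSpace P]
    (hscott : ∀ U : Set P, IsOpen U ↔ ScottOpens U) (hcont : IsContinuousDomain P)
    {ℱ : Set (Set P)} {F : Finset P} (hℱ : UDir ℱ) (hF : F.Nonempty)
    (h : ⋂₀ ℱ ⊆ ucl (F : Set P)) : UConv ℱ (ucl (F : Set P)) := by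
  let a : Fin F.card → P := fun i => F.equivFin.symm i
  have ha_surj : ∀ b ∈ F, ∃ i, a i = b := fun b hb => ⟨F.equivFin ⟨b, hb⟩, by simp [a]⟩
  refine ⟨hℱ, F, hF, rfl, F.card, fun i => {y | wayBelow y (a i)},
    fun i => ⟨a i, (F.equivFin.symm i).2, dConv_setOf_wayBelow hscott hcont _⟩,
    fun b hb => ?_, fun d hd => ?_⟩
  · obtain ⟨i, rfl⟩ := ha_surj b hb
    exact ⟨i, dConv_setOf_wayBelow hscott hcont _⟩
  · have hU : ScottOpens (⋃ i, {z | wayBelow (d i) z}) :=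
      (hscott _).1 <| isOpen_iUnion fun i => (hscott _).2 (scottOpens_setOf_wayBelow hcont _)
    have hsub : ⋂₀ ℱ ⊆ ⋃ i, {z | wayBelow (d i) z} := fun x hx => by
      obtain ⟨b, hb, hbx⟩ := h hx
      obtain ⟨i, rfl⟩ := ha_surj b hb
      exact mem_iUnion.2 ⟨i, (hd i).mono le_rfl ((sle_iff_le hscott).1 hbx)⟩
    have hℱ_fin : ∀ B ∈ ℱ, ∃ G : Set P, G.Finite ∧ B = upperClosure G := fun B hB => by
      obtain ⟨G, -, rfl⟩ := hℱ.1 B hB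
      exact ⟨G, G.finite_toSet, ucl_eq_upperClosure hscott _⟩
    obtain ⟨B, hB, hBU⟩ := exists_mem_subset_of_sInter_subset hcont.1 hℱ_fin hℱ.2.1
      (fun A hA B hB => hℱ.2.2 A hA B hB) hU hsub
    refine ⟨B, hB, hBU.trans (iUnion_mono fun i z hz => ?_)⟩
    exact ⟨d i, rfl, (sle_iff_le hscott).2 hz.le⟩

/-- in a continuous domain with the Scott topology, a directed
family `ℱ ⊆ UX` converges `ℱ ⇒_U ↑F` iff `⋂ℱ ⊆ ↑F`. -/
theorem stmt_15 {P : Type*} [PartialOrder P] [TopologicalSpace P]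
    (hscott : ∀ U : Set P, IsOpen U ↔ ScottOpens U)
    (hcont : IsContinuousDomain P) :
    ∀ (ℱ : Set (Set P)) (F : Finset P), UDir ℱ → F.Nonempty →
      (UConv ℱ (ucl (F : Set P)) ↔ ⋂₀ ℱ ⊆ ucl (F : Set P)) :=
  fun _ _ hℱ hF => ⟨sInter_subset_of_uConv, uConv_of_sInter_subset hscott hcont hℱ hF⟩
end

section
/- Let X be a directed space and PX = {(↓F, ↑F) : F nonempty finite ⊆ X} with the order (↓F₁, ↑F₁) ≤_P (↓F₂, ↑F₂) iff ↓F₁ ⊆ ↓F₂ and ↑F₂ ⊆ ↑F₁ (the Egli–Milner order). Then the operation F̂₁ ⊕ F̂₂ = (↓(F₁∪F₂), ↑(F₁∪F₂)) is well-defined on PX (independent of the choice of representatives F) and is idempotent, associative, and commutative with respect to ≤_P. -/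
variable {X : Type*}

section

variable [TopologicalSpace X]

lemma dcl_union (A B : Set X) : dcl (A ∪ B) = dcl A ∪ dcl B :=
  Set.ext fun _ => by simp only [dcl, Set.mem_union, Set.mem_ofPred_eq, or_and_right, exists_or]

lemma ucl_union (A B : Set X) : ucl (A ∪ B) = ucl A ∪ ucl B :=
  Set.ext fun _ => by simp only [ucl, Set.mem_union, Set.mem_ofPred_eq, or_and_right, exists_or]

end

theorem stmt_19_general [TopologicalSpace X] :
    (∀ F₁ F₂ G₁ G₂ : Finset X, F₁.Nonempty → F₂.Nonempty → G₁.Nonempty → G₂.Nonempty →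
        dcl (F₁ : Set X) = dcl (F₂ : Set X) → ucl (F₁ : Set X) = ucl (F₂ : Set X) →
        dcl (G₁ : Set X) = dcl (G₂ : Set X) → ucl (G₁ : Set X) = ucl (G₂ : Set X) →
        dcl ((F₁ : Set X) ∪ (G₁ : Set X)) = dcl ((F₂ : Set X) ∪ (G₂ : Set X)) ∧
        ucl ((F₁ : Set X) ∪ (G₁ : Set X)) = ucl ((F₂ : Set X) ∪ (G₂ : Set X))) ∧
    (∀ F : Finset X, F.Nonempty →
        dcl ((F : Set X) ∪ (F : Set X)) = dcl (F : Set X) ∧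
        ucl ((F : Set X) ∪ (F : Set X)) = ucl (F : Set X)) ∧
    (∀ F G H : Finset X, F.Nonempty → G.Nonempty → H.Nonempty →
        dcl (((F : Set X) ∪ (G : Set X)) ∪ (H : Set X)) =
          dcl ((F : Set X) ∪ ((G : Set X) ∪ (H : Set X))) ∧
        ucl (((F : Set X) ∪ (G : Set X)) ∪ (H : Set X)) =
          ucl ((F : Set X) ∪ ((G : Set X) ∪ (H : Set X)))) ∧
    (∀ F G : Finset X, F.Nonempty → G.Nonempty →
        dcl ((F : Set X) ∪ (G : Set X)) = dcl ((G : Set X) ∪ (F : Set X)) ∧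
        ucl ((F : Set X) ∪ (G : Set X)) = ucl ((G : Set X) ∪ (F : Set X))) := by
  refine ⟨?_, ?_, ?_, ?_⟩
  · intro F₁ F₂ G₁ G₂ _ _ _ _ hdF huF hdG huG
    exact ⟨by rw [dcl_union, dcl_union, hdF, hdG], by rw [ucl_union, ucl_union, huF, huG]⟩
  · intro F _
    simp only [Set.union_self, and_self]
  · intro F G H _ _ _
    simp only [Set.union_assoc, and_self]
  · intro F G _ _
    exact ⟨by rw [Set.union_comm], by rw [Set.union_comm]⟩

/-- on `PX = {(↓F, ↑F)}` with the Egli–Milner order, the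
operation `F̂₁ ⊕ F̂₂ = (↓(F₁∪F₂), ↑(F₁∪F₂))` is well-defined (independent of the
representatives), idempotent, associative and commutative. -/
theorem stmt_19 [TopologicalSpace X] [T0Space X] (hX : IsDirectedSpace X) :
    (∀ F₁ F₂ G₁ G₂ : Finset X, F₁.Nonempty → F₂.Nonempty → G₁.Nonempty → G₂.Nonempty →
        dcl (F₁ : Set X) = dcl (F₂ : Set X) → ucl (F₁ : Set X) = ucl (F₂ : Set X) →
        dcl (G₁ : Set X) = dcl (G₂ : Set X) → ucl (G₁ : Set X) = ucl (G₂ : Set X) →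
        dcl ((F₁ : Set X) ∪ (G₁ : Set X)) = dcl ((F₂ : Set X) ∪ (G₂ : Set X)) ∧
        ucl ((F₁ : Set X) ∪ (G₁ : Set X)) = ucl ((F₂ : Set X) ∪ (G₂ : Set X))) ∧
    (∀ F : Finset X, F.Nonempty →
        dcl ((F : Set X) ∪ (F : Set X)) = dcl (F : Set X) ∧
        ucl ((F : Set X) ∪ (F : Set X)) = ucl (F : Set X)) ∧
    (∀ F G H : Finset X, F.Nonempty → G.Nonempty → H.Nonempty →
        dcl (((F : Set X) ∪ (G : Set X)) ∪ (H : Set X)) =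
          dcl ((F : Set X) ∪ ((G : Set X) ∪ (H : Set X))) ∧
        ucl (((F : Set X) ∪ (G : Set X)) ∪ (H : Set X)) =
          ucl ((F : Set X) ∪ ((G : Set X) ∪ (H : Set X)))) ∧
    (∀ F G : Finset X, F.Nonempty → G.Nonempty →
        dcl ((F : Set X) ∪ (G : Set X)) = dcl ((G : Set X) ∪ (F : Set X)) ∧
        ucl ((F : Set X) ∪ (G : Set X)) = ucl ((G : Set X) ∪ (F : Set X))) :=
  stmt_19_general
end
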